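/- arXiv:0910.1210 — 4 statements merged into one kernel-verified Lean document; each statement's English description precedes it below -/
import Mathlib

section
/- Suppose smooth functions vⁱ(λ₁,…,λ_N) (pairwise distinct, nonvanishing) and φ(λ₁,…,λ_N) satisfy the Gibbons–Tsarev equations ∂vⁱ/∂λ_j = (vⁱ vʲ/(vʲ−vⁱ)) ∂φ/∂λ_j and ∂²φ/∂λᵢ∂λ_j = 2 (vⁱvʲ/(vⁱ−vʲ)²) (∂φ/∂λᵢ)(∂φ/∂λ_j) for i ≠ j, with ∂φ/∂λᵢ ≠ 0. Then the vⁱ satisfy the semi-Hamiltonian condition: for pairwise distinct i, j, k, ∂/∂λ_k [ (∂vⁱ/∂λ_j)/(vⁱ − vʲ) ] = ∂/∂λ_j [ (∂vⁱ/∂λ_k)/(vⁱ − vᵏ) ]. -/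
/-- Partial derivative in the i-th coordinate direction on ℝᴺ. -/
noncomputable def pd {N : ℕ} (i : Fin N) (f : (Fin N → ℝ) → ℝ) (x : Fin N → ℝ) : ℝ :=
  fderiv ℝ f x (Pi.single i 1)

lemma pd_congr_nhds {N : ℕ} {i : Fin N} {f g : (Fin N → ℝ) → ℝ} {x : Fin N → ℝ}
    (h : f =ᶠ[nhds x] g) : pd i f x = pd i g x := by
  unfold pd; rw [h.fderiv_eq]

lemma pd_mul {N : ℕ} {i : Fin N} {f g : (Fin N → ℝ) → ℝ} {x : Fin N → ℝ}
    (hf : DifferentiableAt ℝ f x) (hg : DifferentiableAt ℝ g x) :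
    pd i (fun y => f y * g y) x = pd i f x * g x + f x * pd i g x := by
  unfold pd
  rw [fderiv_fun_mul hf hg]
  simp
  ring

lemma pd_neg {N : ℕ} {i : Fin N} {f : (Fin N → ℝ) → ℝ} {x : Fin N → ℝ} :
    pd i (fun y => -f y) x = -pd i f x := by
  unfold pd
  rw [fderiv_fun_neg]
  simp

lemma pd_sub {N : ℕ} {i : Fin N} {f g : (Fin N → ℝ) → ℝ} {x : Fin N → ℝ}
    (hf : DifferentiableAt ℝ f x) (hg : DifferentiableAt ℝ g x) :
    pd i (fun y => f y - g y) x = pd i f x - pd i g x := by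
  unfold pd
  rw [fderiv_fun_sub hf hg]
  simp

lemma pd_inv {N : ℕ} {i : Fin N} {g : (Fin N → ℝ) → ℝ} {x : Fin N → ℝ}
    (hg : DifferentiableAt ℝ g x) (hx : g x ≠ 0) :
    pd i (fun y => (g y)⁻¹) x = -pd i g x / g x ^ 2 := by
  have h := ((hasDerivAt_inv hx).comp_hasFDerivAt x hg.hasFDerivAt).fderiv
  unfold pd
  rw [show (fun y => (g y)⁻¹) = (fun t : ℝ => t⁻¹) ∘ g from rfl, h]
  simp
  ring

lemma pd_div {N : ℕ} {i : Fin N} {f g : (Fin N → ℝ) → ℝ} {x : Fin N → ℝ}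
    (hf : DifferentiableAt ℝ f x) (hg : DifferentiableAt ℝ g x) (hx : g x ≠ 0) :
    pd i (fun y => f y / g y) x = (pd i f x * g x - f x * pd i g x) / g x ^ 2 := by
  simp only [div_eq_mul_inv]
  rw [pd_mul (g := fun y => (g y)⁻¹) hf (hg.inv hx), pd_inv hg hx]
  field_simp
  ring

set_option maxHeartbeats 2000000 in
/-- if smooth functions vⁱ (pairwise distinct, nonvanishing) and φ
(with ∂φ/∂λᵢ ≠ 0) satisfy the Gibbons–Tsarev equations, then the vⁱ satisfy the
semi-Hamiltonian condition. -/
theorem stmt3 {N : ℕ} (U : Set (Fin N → ℝ)) (hU : IsOpen U)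
    (v : Fin N → (Fin N → ℝ) → ℝ) (φ : (Fin N → ℝ) → ℝ)
    (hv : ∀ i, ContDiffOn ℝ (⊤ : ℕ∞) (v i) U) (hφ : ContDiffOn ℝ (⊤ : ℕ∞) φ U)
    (hdist : ∀ x ∈ U, ∀ i j, i ≠ j → v i x ≠ v j x)
    (hnz : ∀ x ∈ U, ∀ i, v i x ≠ 0)
    (hφnz : ∀ x ∈ U, ∀ i, pd i φ x ≠ 0)
    (hGT1 : ∀ x ∈ U, ∀ i j, i ≠ j →
      pd j (v i) x = v i x * v j x / (v j x - v i x) * pd j φ x)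
    (hGT2 : ∀ x ∈ U, ∀ i j, i ≠ j →
      pd i (fun y => pd j φ y) x
        = 2 * (v i x * v j x / (v i x - v j x) ^ 2) * pd i φ x * pd j φ x) :
    ∀ x ∈ U, ∀ i j k, i ≠ j → j ≠ k → i ≠ k →
      pd k (fun y => pd j (v i) y / (v i y - v j y)) x
        = pd j (fun y => pd k (v i) y / (v i y - v k y)) x := by
  intro x hx i j k hij hjk hik
  have hUx : U ∈ nhds x := hU.mem_nhds hx
  -- general key computation
  have key : ∀ j k : Fin N, i ≠ j → i ≠ k → j ≠ k →
      pd k (fun y => pd j (v i) y / (v i y - v j y)) x =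
      ((-((v i x * v k x / (v k x - v i x) * pd k φ x) * (v j x * pd j φ x)
          + v i x * ((v j x * v k x / (v k x - v j x) * pd k φ x) * pd j φ x
            + v j x * (2 * (v k x * v j x / (v k x - v j x) ^ 2) * pd k φ x * pd j φ x))))
          * ((v j x - v i x) * (v j x - v i x))
        - (-(v i x * (v j x * pd j φ x)))
          * (((v j x * v k x / (v k x - v j x) * pd k φ x)
              - (v i x * v k x / (v k x - v i x) * pd k φ x)) * (v j x - v i x)
            + (v j x - v i x) * ((v j x * v k x / (v k x - v j x) * pd k φ x)
              - (v i x * v k x / (v k x - v i x) * pd k φ x))))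
        / ((v j x - v i x) * (v j x - v i x)) ^ 2 := by
    intro j k hij hik hjk
    have hab : v j x - v i x ≠ 0 := sub_ne_zero.mpr (Ne.symm (hdist x hx i j hij))
    -- rewrite the integrand on a neighborhood
    have heq : (fun y => pd j (v i) y / (v i y - v j y)) =ᶠ[nhds x]
        (fun y => (-(v i y * (v j y * pd j φ y))) / ((v j y - v i y) * (v j y - v i y))) := by
      filter_upwards [hUx] with y hy
      have h1 := hGT1 y hy i j hij
      have h2 : v j y - v i y ≠ 0 := sub_ne_zero.mpr (Ne.symm (hdist y hy i j hij))
      have h3 : v i y - v j y ≠ 0 := sub_ne_zero.mpr (hdist y hy i j hij)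
      rw [h1]
      field_simp
      ring
    rw [pd_congr_nhds heq]
    -- differentiability facts
    have hvi : DifferentiableAt ℝ (v i) x := ((hv i).contDiffAt hUx).differentiableAt (by simp)
    have hvj : DifferentiableAt ℝ (v j) x := ((hv j).contDiffAt hUx).differentiableAt (by simp)
    have hP : DifferentiableAt ℝ (fun y => pd j φ y) x := by
      have h1 : ContDiffAt ℝ (⊤ : ℕ∞) (fun y => fderiv ℝ φ y) x :=
        (hφ.contDiffAt hUx).fderiv_right (by simp)
      have h2 : ContDiffAt ℝ (⊤ : ℕ∞) (fun y => fderiv ℝ φ y (Pi.single j 1)) x :=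
        h1.clm_apply contDiffAt_const
      exact h2.differentiableAt (by simp)
    have hnum : DifferentiableAt ℝ (fun y => -(v i y * (v j y * pd j φ y))) x :=
      (hvi.mul (hvj.mul hP)).neg
    have hD : DifferentiableAt ℝ (fun y => (v j y - v i y) * (v j y - v i y)) x :=
      (hvj.sub hvi).mul (hvj.sub hvi)
    have hDne : (v j x - v i x) * (v j x - v i x) ≠ 0 := mul_ne_zero hab hab
    rw [pd_div hnum hD hDne, pd_neg, pd_mul (g := fun y => v j y * pd j φ y) hvi (hvj.mul hP), pd_mul hvj hP,
      pd_mul (f := fun y => v j y - v i y) (g := fun y => v j y - v i y) (hvj.sub hvi) (hvj.sub hvi), pd_sub hvj hvi,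
      hGT1 x hx i k hik, hGT1 x hx j k hjk, hGT2 x hx k j (Ne.symm hjk)]
  rw [key j k hij hik hjk, key k j hik hij (Ne.symm hjk)]
  have hab : v j x - v i x ≠ 0 := sub_ne_zero.mpr (Ne.symm (hdist x hx i j hij))
  have hac : v k x - v i x ≠ 0 := sub_ne_zero.mpr (Ne.symm (hdist x hx i k hik))
  have hbc : v k x - v j x ≠ 0 := sub_ne_zero.mpr (Ne.symm (hdist x hx j k hjk))
  have hba : v i x - v j x ≠ 0 := sub_ne_zero.mpr (hdist x hx i j hij)
  have hca : v i x - v k x ≠ 0 := sub_ne_zero.mpr (hdist x hx i k hik)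
  have hcb : v j x - v k x ≠ 0 := sub_ne_zero.mpr (hdist x hx j k hjk)
  field_simp
  ring
end

section
/- Suppose smooth functions vⁱ and φ satisfy the Gibbons–Tsarev equations (as above) for i ≠ j. Then for each fixed i and all j ≠ i, the function g_ii := ∂φ/∂λᵢ satisfies ∂/∂λ_j log √(g_ii) = (∂vⁱ/∂λ_j)/(vʲ − vⁱ). -/
/-- under the Gibbons–Tsarev equations, g_ii := ∂φ/∂λᵢ satisfies
∂_j log √(g_ii) = (∂_j vⁱ)/(vʲ − vⁱ) for all j ≠ i. -/
theorem stmt4 {N : ℕ} (U : Set (Fin N → ℝ)) (hU : IsOpen U)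
    (v : Fin N → (Fin N → ℝ) → ℝ) (φ : (Fin N → ℝ) → ℝ)
    (hv : ∀ i, ContDiffOn ℝ (⊤ : ℕ∞) (v i) U) (hφ : ContDiffOn ℝ (⊤ : ℕ∞) φ U)
    (hdist : ∀ x ∈ U, ∀ i j, i ≠ j → v i x ≠ v j x)
    (hnz : ∀ x ∈ U, ∀ i, v i x ≠ 0)
    (hφpos : ∀ x ∈ U, ∀ i, 0 < pd i φ x)
    (hGT1 : ∀ x ∈ U, ∀ i j, i ≠ j →
      pd j (v i) x = v i x * v j x / (v j x - v i x) * pd j φ x)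
    (hGT2 : ∀ x ∈ U, ∀ i j, i ≠ j →
      pd i (fun y => pd j φ y) x
        = 2 * (v i x * v j x / (v i x - v j x) ^ 2) * pd i φ x * pd j φ x) :
    ∀ x ∈ U, ∀ i j, j ≠ i →
      pd j (fun y => Real.log (Real.sqrt (pd i φ y))) x
        = pd j (v i) x / (v j x - v i x) := by
  intro x hx i j hji
  have hxU : U ∈ nhds x := hU.mem_nhds hx
  -- g := pd i φ is smooth on U
  have hg : ContDiffOn ℝ (⊤ : ℕ∞) (fun y => pd i φ y) U := by
    have h1 : ContDiffOn ℝ (⊤ : ℕ∞) (fun y => fderiv ℝ φ y) U :=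
      hφ.fderiv_of_isOpen hU (by simp)
    exact h1.clm_apply contDiffOn_const
  have hgd : DifferentiableAt ℝ (fun y => pd i φ y) x :=
    (hg.contDiffAt hxU).differentiableAt (by simp)
  have hgpos : 0 < pd i φ x := hφpos x hx i
  -- rewrite log sqrt as log / 2 near x
  have heq : (fun y => Real.log (Real.sqrt (pd i φ y)))
      =ᶠ[nhds x] (fun y => Real.log (pd i φ y) / 2) := by
    filter_upwards [hxU] with y hy
    rw [Real.log_sqrt (hφpos y hy i).le]
  have hF : HasFDerivAt (fun y => pd i φ y)
      (fderiv ℝ (fun y => pd i φ y) x) x := hgd.hasFDerivAt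
  have hlog : HasFDerivAt (fun y => Real.log (pd i φ y) / 2)
      ((2:ℝ)⁻¹ • ((pd i φ x)⁻¹ • fderiv ℝ (fun y => pd i φ y) x)) x := by
    simpa [div_eq_inv_mul] using (hF.log hgpos.ne').const_mul (2:ℝ)⁻¹
  have h1 : fderiv ℝ (fun y => Real.log (Real.sqrt (pd i φ y))) x
      = (2:ℝ)⁻¹ • ((pd i φ x)⁻¹ • fderiv ℝ (fun y => pd i φ y) x) := by
    rw [Filter.EventuallyEq.fderiv_eq heq]
    exact hlog.fderiv
  have hmain : pd j (fun y => Real.log (Real.sqrt (pd i φ y))) x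
      = pd j (fun y => pd i φ y) x / pd i φ x / 2 := by
    show fderiv ℝ (fun y => Real.log (Real.sqrt (pd i φ y))) x (Pi.single j 1) = _
    rw [h1]
    simp only [ContinuousLinearMap.smul_apply, smul_eq_mul, pd]
    ring
  rw [hmain, hGT2 x hx j i hji, hGT1 x hx i j hji.symm]
  have hne : v j x - v i x ≠ 0 := sub_ne_zero.mpr (hdist x hx j i hji)
  field_simp
end

section
/- Let λ(p) be a formal Laurent series λ = p + u₀ + u₁p⁻¹ + u₂p⁻² + … and v a scalar. Then for each n ≥ 1, (1/n)·( p ∂_p(λⁿ)/(p − v) )₊ = ( p ∂_p B_n − v_{(n)} )/(p − v), where B_n = (1/n)(λⁿ)₊, v_{(n)} = (p ∂_p B_n)|_{p=v}, ( )₊ denotes the projection onto nonnegative powers of p, and 1/(p−v) is expanded as a series in p⁻¹. -/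
/-!
Write `P = p - v`. Coefficientwise, `X ↦ X · P` is the difference operator
`(X · P)ₖ = Xₖ₊₁ - v Xₖ`, so truncating `Q / P` to nonnegative powers of `p` only spoils
the identity `(Q / P) · P = Q` at `p⁰`: `(Q / P)₊ · P = Q₊ - c` for a constant `c`.
Evaluating this at `p = v` (a telescoping sum over the finitely many coefficients of the
polynomial `(Q / P)₊`) gives `c = Q₊(v)`. Applied to `Q = (1/n) p∂_p(λⁿ)`, whose positive
part is `p∂_p Bₙ`, this is the theorem.
-/

open HahnSeries Finset

theorem coeff_pow_eq_zero_of_lt {Γ R : Type*} [AddCommMonoid Γ] [LinearOrder Γ]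
    [IsOrderedCancelAddMonoid Γ] [Semiring R] {x : HahnSeries Γ R} {a : Γ}
    (hx : ∀ k < a, x.coeff k = 0) (n : ℕ) : ∀ k < n • a, (x ^ n).coeff k = 0 := by
  intro k hk
  apply coeff_eq_zero_of_lt_orderTop
  calc (k : WithTop Γ) < n • (a : WithTop Γ) := by exact_mod_cast hk
    _ ≤ n • x.orderTop := by
      gcongr
      exact le_orderTop_iff_forall.mpr fun j hj => hx j (WithTop.coe_lt_coe.mp hj)
    _ ≤ (x ^ n).orderTop := orderTop_nsmul_le_orderTop_pow

section

variable {K : Type*} [Field K]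

noncomputable def pSub (v : K) : LaurentSeries K :=
  single (-1 : ℤ) (1 : K) - single (0 : ℤ) v

theorem pSub_ne_zero (v : K) : pSub v ≠ 0 := by
  intro h
  simpa [pSub] using congrArg (fun X : LaurentSeries K => X.coeff (-1)) h

theorem orderTop_pSub (v : K) : (pSub v).orderTop = ((-1 : ℤ) : WithTop ℤ) := by
  rw [pSub, orderTop_sub, orderTop_single one_ne_zero]
  exact (orderTop_single one_ne_zero).trans_lt (lt_orderTop_single (by norm_num))

theorem coeff_mul_pSub (X : LaurentSeries K) (v : K) (k : ℤ) :
    (X * pSub v).coeff k = X.coeff (k + 1) - v * X.coeff k := by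
  have hp : (X * single (-1 : ℤ) (1 : K)).coeff k = X.coeff (k + 1) := by
    simpa using coeff_mul_single_add (r := (1 : K)) (x := X) (a := k + 1) (b := -1)
  have hv : (X * single (0 : ℤ) v).coeff k = X.coeff k * v := by simp
  rw [pSub, mul_sub, coeff_sub, hp, hv, mul_comm v]

theorem coeff_div_pSub_eq_zero {Q : LaurentSeries K} {N : ℤ} (hQ : ∀ k < N, Q.coeff k = 0)
    (v : K) : ∀ k ≤ N, (Q / pSub v).coeff k = 0 := by
  have hN : (N : WithTop ℤ) ≤ (Q / pSub v).orderTop + ((-1 : ℤ) : WithTop ℤ) := by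
    rw [← orderTop_pSub v, ← orderTop_mul, div_mul_cancel₀ _ (pSub_ne_zero v)]
    exact le_orderTop_iff_forall.mpr fun k hk => hQ k (WithTop.coe_lt_coe.mp hk)
  intro k hk
  apply coeff_eq_zero_of_lt_orderTop
  generalize (Q / pSub v).orderTop = t at hN
  cases t with
  | top => exact WithTop.coe_lt_top k
  | coe m =>
    rw [← WithTop.coe_add, WithTop.coe_le_coe] at hN
    exact WithTop.coe_lt_coe.mpr (by omega)

theorem sum_coeff_mul_pSub (X : LaurentSeries K) (v : K) (N : ℕ) :
    ∑ m ∈ range (N + 1), (X * pSub v).coeff (-m) * v ^ m =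
      X.coeff 1 - X.coeff (-N) * v ^ (N + 1) := by
  have htelescope := sum_range_sub' (fun m : ℕ => X.coeff (-m + 1) * v ^ m) (N + 1)
  simp only [coeff_mul_pSub]
  convert htelescope using 2 with m
  · push_cast; ring_nf
  · simp
  · push_cast; ring_nf

theorem truncLT_div_pSub_mul_pSub (Q : LaurentSeries K) (v : K) :
    truncLT 1 (Q / pSub v) * pSub v = truncLT 1 Q - single 0 ((Q / pSub v).coeff 1) := by
  have hrec := coeff_mul_pSub (Q / pSub v) v
  rw [div_mul_cancel₀ _ (pSub_ne_zero v)] at hrec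
  ext k
  rw [coeff_mul_pSub, coeff_sub, coeff_single]
  simp only [HahnSeries.coeff_truncLT]
  rcases lt_trichotomy k 0 with hk | rfl | hk
  · have hk1 : k + 1 < 1 := by omega
    simp [hk.ne, hk1, hk1.trans' (lt_add_one k), hrec]
  · simp [hrec]
  · have hk1 : ¬ k < 1 := by omega
    have hk2 : ¬ k + 1 < 1 := by omega
    simp [hk.ne', hk1, hk2]

theorem truncLT_div_pSub {Q : LaurentSeries K} {N : ℕ} (hQ : ∀ k < -(N : ℤ), Q.coeff k = 0)
    (v : K) :
    truncLT 1 (Q / pSub v) =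
      (truncLT 1 Q - single 0 (∑ m ∈ range (N + 1), (truncLT 1 Q).coeff (-m) * v ^ m)) /
        pSub v := by
  have hconst (c : K) : ∑ m ∈ range (N + 1), (single (0 : ℤ) c).coeff (-m) * v ^ m = c := by
    rw [sum_range_succ', sum_eq_zero fun m _ => by rw [coeff_single_of_ne (by omega), zero_mul]]
    simp
  have hc : (Q / pSub v).coeff 1 = ∑ m ∈ range (N + 1), (truncLT 1 Q).coeff (-m) * v ^ m := by
    have heval := sum_coeff_mul_pSub (truncLT 1 (Q / pSub v)) v N
    rw [truncLT_div_pSub_mul_pSub, coeff_truncLT_of_le le_rfl, coeff_truncLT_of_lt (by omega),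
      coeff_div_pSub_eq_zero hQ v _ le_rfl] at heval
    simp only [coeff_sub, sub_mul, sum_sub_distrib, hconst] at heval
    linear_combination -heval
  rw [eq_div_iff (pSub_ne_zero v), truncLT_div_pSub_mul_pSub, hc]

end

theorem stmt9_general (K : Type) [Field K] (v : K) (n : ℕ)
    (lam Bn Dn Dln Qplus : LaurentSeries K)
    (htop : ∀ k : ℤ, k < -1 → lam.coeff k = 0)
    -- B_n = (1/n)(λⁿ)₊
    (hBn : ∀ k : ℤ, Bn.coeff k = if k ≤ 0 then (n : K)⁻¹ * (lam ^ n).coeff k else 0)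
    -- Dn = p ∂_p B_n
    (hDn : ∀ k : ℤ, Dn.coeff k = ((-k : ℤ) : K) * Bn.coeff k)
    -- Dln = p ∂_p (λⁿ)
    (hDln : ∀ k : ℤ, Dln.coeff k = ((-k : ℤ) : K) * (lam ^ n).coeff k)
    -- Qplus = ( (1/n)·p∂_p(λⁿ)/(p−v) )₊
    (hQplus : ∀ k : ℤ, Qplus.coeff k =
      if k ≤ 0 then
        ((n : K)⁻¹ •
          (Dln / (HahnSeries.single (-1 : ℤ) (1 : K) - HahnSeries.single (0 : ℤ) v))).coeff k
      else 0) :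
    Qplus =
      (Dn - HahnSeries.single (0 : ℤ)
          (∑ m ∈ Finset.range (n + 1), Dn.coeff (-(m : ℤ)) * v ^ m)) /
        (HahnSeries.single (-1 : ℤ) (1 : K) - HahnSeries.single (0 : ℤ) v) := by
  set Q := (n : K)⁻¹ • Dln
  have hQ_low : ∀ k < -(n : ℤ), Q.coeff k = 0 := by
    intro k hk
    have := coeff_pow_eq_zero_of_lt htop n k (by simpa using hk)
    simp [Q, hDln, this]
  have hDn_eq : Dn = truncLT 1 Q := by
    ext k
    rw [hDn, hBn, HahnSeries.coeff_truncLT, coeff_smul, hDln, smul_eq_mul]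
    split_ifs <;> first | omega | ring
  have hQplus_eq : Qplus = truncLT 1 (Q / pSub v) := by
    have hQ_div : Q / pSub v = (n : K)⁻¹ • (Dln / pSub v) := by
      simp only [Q, ← C_mul_eq_smul, mul_div_assoc]
    ext k
    rw [hQplus, HahnSeries.coeff_truncLT, hQ_div]
    split_ifs <;> first | omega | rfl
  rw [hQplus_eq, hDn_eq]
  exact truncLT_div_pSub hQ_low v

/-- for λ = p + u₀ + u₁p⁻¹ + …, n ≥ 1, B_n = (1/n)(λⁿ)₊ and
v_{(n)} = (p∂_pB_n)|_{p=v}, one has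
(1/n)·( p∂_p(λⁿ)/(p−v) )₊ = ( p∂_pB_n − v_{(n)} )/(p−v). -/
theorem stmt9 (K : Type) [Field K] [CharZero K] (v : K) (n : ℕ) (hn : 1 ≤ n)
    (lam Bn Dn Dln Qplus : LaurentSeries K)
    -- λ = p + u₀ + u₁ p⁻¹ + … : leading coefficient 1 at p¹, no higher powers
    (hlead : lam.coeff (-1) = 1)
    (htop : ∀ k : ℤ, k < -1 → lam.coeff k = 0)
    -- B_n = (1/n)(λⁿ)₊
    (hBn : ∀ k : ℤ, Bn.coeff k = if k ≤ 0 then (n : K)⁻¹ * (lam ^ n).coeff k else 0)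
    -- Dn = p ∂_p B_n
    (hDn : ∀ k : ℤ, Dn.coeff k = ((-k : ℤ) : K) * Bn.coeff k)
    -- Dln = p ∂_p (λⁿ)
    (hDln : ∀ k : ℤ, Dln.coeff k = ((-k : ℤ) : K) * (lam ^ n).coeff k)
    -- Qplus = ( (1/n)·p∂_p(λⁿ)/(p−v) )₊
    (hQplus : ∀ k : ℤ, Qplus.coeff k =
      if k ≤ 0 then
        ((n : K)⁻¹ •
          (Dln / (HahnSeries.single (-1 : ℤ) (1 : K) - HahnSeries.single (0 : ℤ) v))).coeff k
      else 0) :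
    Qplus =
      (Dn - HahnSeries.single (0 : ℤ)
          (∑ m ∈ Finset.range (n + 1), Dn.coeff (-(m : ℤ)) * v ^ m)) /
        (HahnSeries.single (-1 : ℤ) (1 : K) - HahnSeries.single (0 : ℤ) v) :=
  stmt9_general K v n lam Bn Dn Dln Qplus htop hBn hDn hDln hQplus
end

section
/- Suppose λ(p; λ₁,…,λ_N) and λ̄(p; λ₁,…,λ_N) are smooth functions, each invertible in p on a common domain, satisfying the Loewner equations ∂λ/∂λᵢ = (p λ_p/(p − vⁱ)) ∂u₀/∂λᵢ and ∂λ̄/∂λᵢ = (p λ̄_p/(p − vⁱ)) ∂u₀/∂λᵢ for all i. Then λ and λ̄ are functionally dependent: λ = F(λ̄) for a function F independent of the parameters λ₁,…,λ_N. Equivalently, defining F(λ̄, λ₁,…,λ_N) := λ(p(λ̄, λ₁,…,λ_N), λ₁,…,λ_N) with p(λ̄,·) the inverse of λ̄ in p, one has ∂F/∂λᵢ = 0 for all i. -/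
/-- Partial derivative with respect to the parameter λᵢ of a function of (p, λ). -/
noncomputable def pdi {N : ℕ} (i : Fin N) (f : ℝ × (Fin N → ℝ) → ℝ)
    (x : ℝ × (Fin N → ℝ)) : ℝ :=
  fderiv ℝ f x (0, Pi.single i 1)

/-- Partial derivative with respect to p of a function of (p, λ). -/
noncomputable def pdp {N : ℕ} (f : ℝ × (Fin N → ℝ) → ℝ) (x : ℝ × (Fin N → ℝ)) : ℝ :=
  fderiv ℝ f x (1, 0)

/-- Partial derivative in the i-th direction of a function of the parameters only. -/
noncomputable def pdparam {N : ℕ} (i : Fin N) (f : (Fin N → ℝ) → ℝ) (x : Fin N → ℝ) : ℝ :=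
  fderiv ℝ f x (Pi.single i 1)

/-- if λ and λ̄ both satisfy the Loewner equations
∂λ/∂λᵢ = (p λ_p/(p − vⁱ)) ∂u₀/∂λᵢ, then they are functionally dependent:
F(λ̄, λ₁,…,λ_N) := λ(p(λ̄, λ), λ) built from the inverse p(λ̄, ·) of λ̄ in p
satisfies ∂F/∂λᵢ = 0 for all i. -/
theorem stmt11 {N : ℕ}
    (lam lamb : ℝ × (Fin N → ℝ) → ℝ)
    (v : Fin N → (Fin N → ℝ) → ℝ) (u0 : (Fin N → ℝ) → ℝ)
    (hlam : ContDiff ℝ (⊤ : ℕ∞) lam) (hlamb : ContDiff ℝ (⊤ : ℕ∞) lamb)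
    (hvsm : ∀ i, ContDiff ℝ (⊤ : ℕ∞) (v i)) (hu0 : ContDiff ℝ (⊤ : ℕ∞) u0)
    (U : Set (ℝ × (Fin N → ℝ))) (hU : IsOpen U)
    (hlambp : ∀ x ∈ U, pdp lamb x ≠ 0)
    (hpv : ∀ x ∈ U, ∀ i, x.1 ≠ v i x.2)
    (hLoe : ∀ x ∈ U, ∀ i,
      pdi i lam x = x.1 * pdp lam x / (x.1 - v i x.2) * pdparam i u0 x.2)
    (hLoeb : ∀ x ∈ U, ∀ i,
      pdi i lamb x = x.1 * pdp lamb x / (x.1 - v i x.2) * pdparam i u0 x.2)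
    (V : Set (ℝ × (Fin N → ℝ))) (hV : IsOpen V)
    (P : ℝ × (Fin N → ℝ) → ℝ) (hP : ContDiffOn ℝ (⊤ : ℕ∞) P V)
    (hPU : ∀ y ∈ V, (P y, y.2) ∈ U)
    (hinv : ∀ y ∈ V, lamb (P y, y.2) = y.1) :
    ∀ y ∈ V, ∀ i,
      fderiv ℝ (fun z : ℝ × (Fin N → ℝ) => lam (P z, z.2)) y (0, Pi.single i 1) = 0 := by
  intro y hy i
  set x : ℝ × (Fin N → ℝ) := (P y, y.2) with hx
  have hxU : x ∈ U := hPU y hy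
  have hPd : DifferentiableAt ℝ P y :=
    (hP.differentiableOn (by simp)).differentiableAt (hV.mem_nhds hy)
  have hGd : DifferentiableAt ℝ (fun z : ℝ × (Fin N → ℝ) => (P z, z.2)) y :=
    hPd.prodMk differentiable_snd.differentiableAt
  -- derivative of G in direction (0, e_i)
  have hG : fderiv ℝ (fun z : ℝ × (Fin N → ℝ) => (P z, z.2)) y (0, Pi.single i 1)
      = (fderiv ℝ P y (0, Pi.single i 1), Pi.single i 1) := by
    rw [DifferentiableAt.fderiv_prodMk hPd differentiable_snd.differentiableAt]
    simp [fderiv_snd]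
  set c : ℝ := fderiv ℝ P y (0, Pi.single i 1) with hc
  -- chain rule for any smooth f : value is c * pdp f x + pdi i f x
  have key : ∀ f : ℝ × (Fin N → ℝ) → ℝ, ContDiff ℝ (⊤ : ℕ∞) f →
      fderiv ℝ (fun z : ℝ × (Fin N → ℝ) => f (P z, z.2)) y (0, Pi.single i 1)
        = c * pdp f x + pdi i f x := by
    intro f hf
    have hfd : DifferentiableAt ℝ f x := (hf.differentiable (by simp)) x
    have hcomp := fderiv_comp y hfd hGd
    have : fderiv ℝ (fun z : ℝ × (Fin N → ℝ) => f (P z, z.2)) y (0, Pi.single i 1)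
        = fderiv ℝ f x (fderiv ℝ (fun z : ℝ × (Fin N → ℝ) => (P z, z.2)) y
            (0, Pi.single i 1)) := by
      rw [show (fun z : ℝ × (Fin N → ℝ) => f (P z, z.2))
          = f ∘ (fun z : ℝ × (Fin N → ℝ) => (P z, z.2)) from rfl, hcomp]
      rfl
    rw [this, hG]
    have hdecomp : ((c, Pi.single i 1) : ℝ × (Fin N → ℝ))
        = c • ((1 : ℝ), (0 : Fin N → ℝ)) + ((0 : ℝ), Pi.single i 1) := by
      simp [Prod.ext_iff]
    rw [hdecomp, map_add, map_smul, pdp, pdi, smul_eq_mul]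
  -- derivative of lamb ∘ G: since lamb (P z, z.2) = z.1 on V, derivative is fst
  have hbar : c * pdp lamb x + pdi i lamb x = 0 := by
    have heq : (fun z : ℝ × (Fin N → ℝ) => lamb (P z, z.2)) =ᶠ[nhds y]
        (fun z : ℝ × (Fin N → ℝ) => z.1) := by
      filter_upwards [hV.mem_nhds hy] with z hz using hinv z hz
    have := heq.fderiv_eq (𝕜 := ℝ)
    have h1 : fderiv ℝ (fun z : ℝ × (Fin N → ℝ) => lamb (P z, z.2)) y
        (0, Pi.single i 1) = 0 := by
      rw [this, fderiv_fst]; rfl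
    rw [key lamb hlamb] at h1
    exact h1
  rw [key lam hlam]
  -- now algebra using the Loewner equations
  have hL : pdi i lam x = x.1 * pdp lam x / (x.1 - v i x.2) * pdparam i u0 x.2 :=
    hLoe x hxU i
  have hLb : pdi i lamb x = x.1 * pdp lamb x / (x.1 - v i x.2) * pdparam i u0 x.2 :=
    hLoeb x hxU i
  have hbne : pdp lamb x ≠ 0 := hlambp x hxU
  have hpvne : x.1 - v i x.2 ≠ 0 := sub_ne_zero.mpr (hpv x hxU i)
  rw [hLb] at hbar
  rw [hL]
  have h2 : pdp lamb x * (c * (x.1 - v i x.2) + x.1 * pdparam i u0 x.2) = 0 := by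
    field_simp at hbar
    linear_combination hbar
  have h3 : c * (x.1 - v i x.2) + x.1 * pdparam i u0 x.2 = 0 :=
    (mul_eq_zero.mp h2).resolve_left hbne
  field_simp
  linear_combination pdp lam x * h3
end
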